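/- arXiv:1111.4590 — 6 statements merged into one kernel-verified Lean document; each statement's English description precedes it below -/
import Mathlib

section
/- Let A be a nonsingular 2×2 complex matrix with entries a,b,c,d such that the *-cosquare (A*)⁻¹A has eigenvalues μ and 1/conj(μ) with 0 < |μ| < 1. Then |a·conj(d) + conj(a)·d − |c|² − |b|²| > 2·|ad − bc|. -/
/-!
The trace of the *-cosquare `(Aᴴ)⁻¹A` of `A = !![a, b; c, d]` is
`conj(ad - bc)⁻¹ (a conj d + conj a d - |c|² - |b|²)`, and, read off the characteristic
polynomial, it is also `μ + 1/conj μ`, a positive real multiple of `μ` of modulus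
`|μ| + 1/|μ|`. This exceeds `2` because `|μ| ≠ 1`.
-/

open Matrix Polynomial ComplexConjugate

theorem Matrix.trace_eq_add_of_charpoly_eq_mul {R n : Type*} [CommRing R] [Fintype n]
    [DecidableEq n] {M : Matrix n n R} {x y : R}
    (h : M.charpoly = (X - C x) * (X - C y)) : M.trace = x + y := by
  nontriviality R
  rw [trace_eq_neg_charpoly_nextCoeff, h, (monic_X_sub_C x).nextCoeff_mul (monic_X_sub_C y),
    nextCoeff_X_sub_C, nextCoeff_X_sub_C, neg_add, neg_neg, neg_neg]

theorem Matrix.conjTranspose_of_fin_two {α : Type*} [Star α] (a b c d : α) :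
    (!![a, b; c, d])ᴴ = !![star a, star c; star b, star d] := by
  ext i j
  fin_cases i <;> fin_cases j <;> rfl

theorem Matrix.trace_conjTranspose_inv_mul_fin_two {K : Type*} [Field K] [StarRing K]
    (a b c d : K) :
    ((!![a, b; c, d])ᴴ⁻¹ * !![a, b; c, d]).trace
      = (star (a * d - b * c))⁻¹ * (a * star d + star a * d - star c * c - star b * b) := by
  rw [conjTranspose_of_fin_two, inv_def, Ring.inverse_eq_inv', adjugate_fin_two_of,
    det_fin_two_of, smul_mul, trace_smul, mul_fin_two, trace_fin_two_of, smul_eq_mul,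
    star_sub, star_mul', star_mul']
  ring

theorem Complex.norm_add_inv_conj (z : ℂ) : ‖z + (conj z)⁻¹‖ = ‖z‖ + ‖z‖⁻¹ := by
  rcases eq_or_ne z 0 with rfl | hz
  · simp
  have hz' : conj z ≠ 0 := by simpa using hz
  have hreal_mul : z + (conj z)⁻¹ = ((1 + (‖z‖ ^ 2)⁻¹ : ℝ) : ℂ) * z := by
    push_cast
    rw [← mul_conj']
    field_simp
  rw [hreal_mul, norm_mul, norm_real, Real.norm_of_nonneg (by positivity)]
  field_simp

theorem two_lt_add_inv {r : ℝ} (hr : 0 < r) (hr1 : r ≠ 1) : 2 < r + r⁻¹ := by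
  have hpos : 0 < (r - 1) ^ 2 / r := by
    have := sub_ne_zero.2 hr1
    positivity
  calc 2 < 2 + (r - 1) ^ 2 / r := by linarith
    _ = r + r⁻¹ := by field_simp; ring

/-- If the *-cosquare `(Aᴴ)⁻¹A` of a nonsingular matrix `A = !![a,b;c,d]` has
eigenvalues `μ` and `1/conj μ` with `0 < |μ| < 1`, then
`|a conj d + conj a d − |c|² − |b|²| > 2 |ad − bc|`. -/
theorem star_cosquare_nonunimodular_eigenvalues
    (a b c d mu : ℂ)
    (hA : IsUnit (!![a, b; c, d] : Matrix (Fin 2) (Fin 2) ℂ).det)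
    (hmu0 : 0 < ‖mu‖) (hmu1 : ‖mu‖ < 1)
    (hchar : ((!![a, b; c, d] : Matrix (Fin 2) (Fin 2) ℂ)ᴴ⁻¹ * !![a, b; c, d]).charpoly
      = (X - C mu) * (X - C (1 / starRingEnd ℂ mu))) :
    2 * ‖a * d - b * c‖
      < ‖a * starRingEnd ℂ d + starRingEnd ℂ a * d
          - (‖c‖ : ℂ) ^ 2 - (‖b‖ : ℂ) ^ 2‖ := by
  have hdet : a * d - b * c ≠ 0 := by simpa [det_fin_two_of] using hA.ne_zero
  have htrace := (trace_conjTranspose_inv_mul_fin_two a b c d).symm.trans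
    (trace_eq_add_of_charpoly_eq_mul hchar)
  rw [inv_mul_eq_iff_eq_mul₀ (star_ne_zero.2 hdet), one_div] at htrace
  simp only [← starRingEnd_apply] at htrace
  rw [← Complex.conj_mul', ← Complex.conj_mul', htrace, norm_mul, Complex.norm_conj,
    Complex.norm_add_inv_conj, mul_comm]
  exact mul_lt_mul_of_pos_left (two_lt_add_inv hmu0 hmu1.ne) (norm_pos_iff.2 hdet)
end

section
/- The pair (A,B) with A = [[1,0],[0,−1]], B = 0 and the pair (A',B') with A' = 0, B' = [[1,0],[0,1]] can be joined by a continuous path (A_t, B_t) in pairs of 2×2 complex matrices with B_t symmetric such that det [[A_t, conj(B_t)],[B_t, conj(A_t)]] > 0 for all t ∈ [0,1]. -/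
/-!
Interpolating linearly from `(diag(1,-1), 0)` to `(0, 1)` fails: along `A_t = (1-t) diag(1,-1)`,
`B_t = t • 1` the determinant is `((1-t)² - t²)²`, which vanishes at `t = 1/2`. Adding the
skew-symmetric bump `x(t) • !![0, i; -i, 0]` with `x(t) = t(1-t)` turns the determinant into
`((1-t)² - x² - t²)² + 4 (1-t)² x²`, and the second square is positive on `(0,1)`, while the
first one equals `1` at both endpoints.
-/

open Matrix ComplexOrder Complex

theorem det_fromBlocks_fin_two {R : Type*} [CommRing R] (A B C D : Matrix (Fin 2) (Fin 2) R) :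
    (fromBlocks A B C D).det =
      (!![A 0 0, A 0 1, B 0 0, B 0 1;
          A 1 0, A 1 1, B 1 0, B 1 1;
          C 0 0, C 0 1, D 0 0, D 0 1;
          C 1 0, C 1 1, D 1 0, D 1 1] : Matrix (Fin 4) (Fin 4) R).det := by
  rw [← det_submatrix_equiv_self finSumFinEquiv.symm]
  congr 1
  ext i j
  fin_cases i <;> fin_cases j <;> rfl

noncomputable def twistedA (a s : ℝ) : Matrix (Fin 2) (Fin 2) ℂ :=
  !![(a : ℂ), s * I; -(s * I), -(a : ℂ)]

theorem twistedA_one_zero : twistedA 1 0 = !![1, 0; 0, -1] := by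
  simp [twistedA]

theorem twistedA_zero_zero : twistedA 0 0 = 0 := by
  ext i j
  fin_cases i <;> fin_cases j <;> simp [twistedA]

theorem det_fromBlocks_twistedA_smul_one (a s b : ℝ) :
    (fromBlocks (twistedA a s) (((b : ℂ) • 1 : Matrix (Fin 2) (Fin 2) ℂ).map (starRingEnd ℂ))
      ((b : ℂ) • 1) ((twistedA a s).map (starRingEnd ℂ))).det =
      (((a ^ 2 - s ^ 2 - b ^ 2) ^ 2 + 4 * a ^ 2 * s ^ 2 : ℝ) : ℂ) := by
  rw [det_fromBlocks_fin_two]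
  simp [twistedA, det_succ_row_zero, Fin.sum_univ_succ, Fin.succAbove, one_apply]
  ring_nf
  simp only [I_sq, I_pow_four]
  ring

theorem sq_add_four_mul_sq_pos {a s c : ℝ} (h : a * s ≠ 0 ∨ c ≠ 0) :
    0 < c ^ 2 + 4 * a ^ 2 * s ^ 2 := by
  rcases h with has | hc
  · have : 0 < (a * s) ^ 2 := by positivity
    nlinarith [sq_nonneg c]
  · have : 0 < c ^ 2 := by positivity
    nlinarith [sq_nonneg (a * s)]

noncomputable def pathA (t : ℝ) : Matrix (Fin 2) (Fin 2) ℂ :=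
  twistedA (1 - t) (t * (1 - t))

noncomputable def pathB (t : ℝ) : Matrix (Fin 2) (Fin 2) ℂ :=
  (t : ℂ) • 1

theorem continuous_pathA : Continuous pathA := by
  refine continuous_matrix fun i j => ?_
  fin_cases i <;> fin_cases j <;> simp [pathA, twistedA] <;> fun_prop

theorem continuous_pathB : Continuous pathB := by
  unfold pathB
  fun_prop

theorem det_fromBlocks_path_pos (t : ℝ) :
    0 < (fromBlocks (pathA t) ((pathB t).map (starRingEnd ℂ)) (pathB t)
      ((pathA t).map (starRingEnd ℂ))).det := by
  rw [pathA, pathB, det_fromBlocks_twistedA_smul_one, zero_lt_real]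
  apply sq_add_four_mul_sq_pos
  by_cases ht : t * (1 - t) = 0
  · right
    obtain rfl | rfl : t = 0 ∨ t = 1 := by simpa [sub_eq_zero, eq_comm (a := (1 : ℝ))] using ht
    all_goals norm_num
  · left
    exact mul_ne_zero (right_ne_zero_of_mul ht) ht

/-- The pairs `(!![1,0;0,-1], 0)` and `(0, 1)` can be joined by a continuous path
`(A_t, B_t)`, `t ∈ [0,1]`, of pairs of 2×2 complex matrices with `B_t` symmetric,
along which the determinant of `[[A_t, conj B_t],[B_t, conj A_t]]` stays positive. -/
theorem path_in_M_plus_between_models :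
    ∃ A B : ℝ → Matrix (Fin 2) (Fin 2) ℂ,
      ContinuousOn A (Set.Icc 0 1) ∧ ContinuousOn B (Set.Icc 0 1) ∧
      A 0 = !![1, 0; 0, -1] ∧ B 0 = 0 ∧ A 1 = 0 ∧ B 1 = 1 ∧
      ∀ t ∈ Set.Icc (0 : ℝ) 1,
        (B t)ᵀ = B t ∧
        0 < (Matrix.fromBlocks (A t) ((B t).map (starRingEnd ℂ)) (B t)
              ((A t).map (starRingEnd ℂ))).det := by
  refine ⟨pathA, pathB, continuous_pathA.continuousOn, continuous_pathB.continuousOn,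
    ?_, by simp [pathB], ?_, by simp [pathB], fun t _ => ⟨by simp [pathB], det_fromBlocks_path_pos t⟩⟩
  · simpa [pathA] using twistedA_one_zero
  · simpa [pathA] using twistedA_zero_zero
end

section
/- For every t ∈ [0,1] and real x, the determinant of [[A_t, conj(B_t)],[B_t, conj(A_t)]] with A_t = [[t + i·x, 1−t],[0,0]] and B_t = [[0,0],[1−t, t]] equals −((1−2t)² + t²x²); in particular it is negative whenever t ≠ 1/2 or (t = 1/2 and x ≠ 0). -/
/-!
Swapping the second and fourth rows turns `[[A, conj B], [B, conj A]]` into the block-diagonal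
matrix `diag(M, conj M)` with `M = A + B = [[t + ix, 1 - t], [1 - t, t]]`, so, the swap being a
transposition, the determinant is `-det M * conj (det M) = -|det M|²`, and `det M = (2t - 1) + itx`.
-/

open Matrix ComplexOrder

theorem Matrix.map_fin_two {α β : Type*} (f : α → β) (a b c d : α) :
    !![a, b; c, d].map f = !![f a, f b; f c, f d] := by
  ext i j; fin_cases i <;> fin_cases j <;> rfl

theorem Matrix.det_fromBlocks_split_rows {R : Type*} [CommRing R] (a b c d a' b' c' d' : R) :
    (fromBlocks !![a, b; 0, 0] !![0, 0; c', d'] !![0, 0; c, d] !![a', b'; 0, 0]).det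
      = -(!![a, b; c, d].det * !![a', b'; c', d'].det) := by
  set N := fromBlocks !![a, b; 0, 0] !![0, 0; c', d'] !![0, 0; c, d] !![a', b'; 0, 0]
  have hswap : N.submatrix (Equiv.swap (Sum.inl 1) (Sum.inr 1)) id
      = fromBlocks !![a, b; c, d] 0 0 !![a', b'; c', d'] := by
    ext (i | i) (j | j) <;> fin_cases i <;> fin_cases j <;> rfl
  have hperm := det_permute (Equiv.swap (Sum.inl 1 : Fin 2 ⊕ Fin 2) (Sum.inr 1)) N
  rw [hswap, det_fromBlocks_zero₂₁, Equiv.Perm.sign_swap (by simp)] at hperm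
  rw [hperm, Units.val_neg, Units.val_one, Int.cast_neg, Int.cast_one, neg_one_mul, neg_neg]

theorem Matrix.det_fromBlocks_split_rows_map_conj (a b c d : ℂ) :
    (fromBlocks !![a, b; 0, 0] (!![0, 0; c, d].map (starRingEnd ℂ)) !![0, 0; c, d]
      (!![a, b; 0, 0].map (starRingEnd ℂ))).det = -(Complex.normSq !![a, b; c, d].det : ℂ) := by
  rw [map_fin_two, map_fin_two, map_zero, det_fromBlocks_split_rows, ← Complex.mul_conj,
    det_fin_two_of, det_fin_two_of, map_sub, map_mul, map_mul]

theorem normSq_det_homotopy (t x : ℝ) :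
    Complex.normSq !![(t : ℂ) + (x : ℂ) * Complex.I, (1 - t : ℂ); (1 - t : ℂ), (t : ℂ)].det
      = (1 - 2 * t) ^ 2 + t ^ 2 * x ^ 2 := by
  rw [det_fin_two_of, Complex.normSq_apply]
  simp only [Complex.sub_re, Complex.sub_im, Complex.mul_re, Complex.mul_im, Complex.add_re,
    Complex.add_im, Complex.ofReal_re, Complex.ofReal_im, Complex.I_re, Complex.I_im,
    Complex.one_re, Complex.one_im]
  ring

theorem det_block_homotopy_hyperbolic_general (t x : ℝ) :
    (Matrix.fromBlocks
        (!![(t : ℂ) + (x : ℂ) * Complex.I, (1 - t : ℂ); 0, 0])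
        ((!![(0 : ℂ), 0; (1 - t : ℂ), (t : ℂ)]).map (starRingEnd ℂ))
        (!![(0 : ℂ), 0; (1 - t : ℂ), (t : ℂ)])
        ((!![(t : ℂ) + (x : ℂ) * Complex.I, (1 - t : ℂ); 0, 0]).map
          (starRingEnd ℂ))).det
      = ((-((1 - 2 * t) ^ 2 + t ^ 2 * x ^ 2) : ℝ) : ℂ)
    ∧ ((t ≠ 1 / 2 ∨ (t = 1 / 2 ∧ x ≠ 0)) →
        (Matrix.fromBlocks
          (!![(t : ℂ) + (x : ℂ) * Complex.I, (1 - t : ℂ); 0, 0])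
          ((!![(0 : ℂ), 0; (1 - t : ℂ), (t : ℂ)]).map (starRingEnd ℂ))
          (!![(0 : ℂ), 0; (1 - t : ℂ), (t : ℂ)])
          ((!![(t : ℂ) + (x : ℂ) * Complex.I, (1 - t : ℂ); 0, 0]).map
            (starRingEnd ℂ))).det < 0) := by
  have hdet := det_fromBlocks_split_rows_map_conj ((t : ℂ) + (x : ℂ) * Complex.I) (1 - t) (1 - t) t
  rw [normSq_det_homotopy, ← Complex.ofReal_neg] at hdet
  refine ⟨hdet, fun h => ?_⟩
  have hpos : 0 < (1 - 2 * t) ^ 2 + t ^ 2 * x ^ 2 := by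
    rcases h with ht | ⟨rfl, hx⟩
    · have : 1 - 2 * t ≠ 0 := fun h => ht (by linarith)
      positivity
    · positivity
  rw [hdet]
  exact_mod_cast neg_neg_of_pos hpos

/-- For `A_t = !![t + ix, 1−t; 0, 0]` and `B_t = !![0,0;1−t,t]`, `t ∈ [0,1]`,
`x ∈ ℝ`, the determinant of `[[A_t, conj B_t],[B_t, conj A_t]]` equals
`−((1−2t)² + t²x²)`, hence is negative whenever `t ≠ 1/2`, or `t = 1/2` and `x ≠ 0`. -/
theorem det_block_homotopy_hyperbolic (t x : ℝ) (ht : t ∈ Set.Icc (0 : ℝ) 1) :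
    (Matrix.fromBlocks
        (!![(t : ℂ) + (x : ℂ) * Complex.I, (1 - t : ℂ); 0, 0])
        ((!![(0 : ℂ), 0; (1 - t : ℂ), (t : ℂ)]).map (starRingEnd ℂ))
        (!![(0 : ℂ), 0; (1 - t : ℂ), (t : ℂ)])
        ((!![(t : ℂ) + (x : ℂ) * Complex.I, (1 - t : ℂ); 0, 0]).map
          (starRingEnd ℂ))).det
      = ((-((1 - 2 * t) ^ 2 + t ^ 2 * x ^ 2) : ℝ) : ℂ)
    ∧ ((t ≠ 1 / 2 ∨ (t = 1 / 2 ∧ x ≠ 0)) →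
        (Matrix.fromBlocks
          (!![(t : ℂ) + (x : ℂ) * Complex.I, (1 - t : ℂ); 0, 0])
          ((!![(0 : ℂ), 0; (1 - t : ℂ), (t : ℂ)]).map (starRingEnd ℂ))
          (!![(0 : ℂ), 0; (1 - t : ℂ), (t : ℂ)])
          ((!![(t : ℂ) + (x : ℂ) * Complex.I, (1 - t : ℂ); 0, 0]).map
            (starRingEnd ℂ))).det < 0) :=
  det_block_homotopy_hyperbolic_general t x
end

section
/- The set M⁺ of pairs (A,B) of 2×2 complex matrices with B symmetric and det [[A, conj(B)],[B, conj(A)]] > 0 is path-connected. -/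
/-!
For 2×2 blocks the determinant expands as `D(A,B) = |det A|² + |det B|² - κ(A,B)`, where
`κ(A,B) = tr(N N̄)` with `N = A adj(B)` is real; hence `D(xA, yB) = x⁴|det A|² + y⁴|det B|² - x²y²κ`
for real `x, y`. After a small perturbation making `A` invertible, convexity of
`s ↦ |det A|² s² - κ s + |det B|²` shows that in `M⁺` one can scale either `B` or `A` down to `0`.
The slices `{(A, 0) : det A ≠ 0}` and `{(0, B) : B = Bᵀ, det B ≠ 0}` are path-connected, because a
complex line through an invertible matrix meets the singular ones in finitely many points, and
`(J, 1)` with `J = [[0, 1], [-1, 0]]` can be scaled into both of them.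
-/

open Matrix ComplexOrder Set

namespace Matrix

variable {n R : Type*} [Fintype n]

theorem eval_det_X_smul_add [DecidableEq n] [CommRing R] (A U : Matrix n n R) (z : R) :
    (det ((Polynomial.X : Polynomial R) • U.map Polynomial.C + A.map Polynomial.C)).eval z =
      det (z • U + A) := by
  rw [← Polynomial.coe_evalRingHom, RingHom.map_det]
  congr 1
  ext i j
  simp [mul_comm z]

theorem finite_setOf_det_smul_add_eq_zero [DecidableEq n] [CommRing R] [IsDomain R]
    {A U : Matrix n n R} (h : A.det ≠ 0 ∨ U.det ≠ 0) : {z : R | det (z • U + A) = 0}.Finite := by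
  have hp : det ((Polynomial.X : Polynomial R) • U.map Polynomial.C + A.map Polynomial.C) ≠ 0 := by
    intro hp
    rcases h with h | h
    · exact h (by rw [← Polynomial.coeff_det_X_add_C_zero U A, hp, Polynomial.coeff_zero])
    · exact h (by rw [← Polynomial.coeff_det_X_add_C_card U A, hp, Polynomial.coeff_zero])
  simpa only [Polynomial.IsRoot.def, eval_det_X_smul_add] using
    Polynomial.finite_setOfPred_isRoot hp

theorem joinedIn_det_smul_sub_add_ne_zero [DecidableEq n] {A₀ A₁ : Matrix n n ℂ}
    (h₀ : A₀.det ≠ 0) (h₁ : A₁.det ≠ 0) : JoinedIn {z : ℂ | det (z • (A₁ - A₀) + A₀) ≠ 0} 0 1 := by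
  have hconn : IsPathConnected {z : ℂ | det (z • (A₁ - A₀) + A₀) = 0}ᶜ :=
    (finite_setOf_det_smul_add_eq_zero (.inl h₀)).countable.isPathConnected_compl_of_one_lt_rank
      (by simp [Complex.rank_real_complex])
  exact hconn.joinedIn 0 (by simpa using h₀) 1 (by simpa using h₁)

theorem conj_trace_mul_map_conj (N : Matrix n n ℂ) :
    starRingEnd ℂ (trace (N * N.map (starRingEnd ℂ))) = trace (N * N.map (starRingEnd ℂ)) := by
  rw [AddMonoidHom.map_trace, Matrix.map_mul, Matrix.map_map, trace_mul_comm]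
  simp [Function.comp_def]

end Matrix

theorem quadratic_pos_on_Icc_or {a b c : ℝ} (ha : 0 < a) (h : 0 < a + c - b) :
    (∀ w ∈ Icc (0 : ℝ) 1, 0 < a - b * w + c * w ^ 2) ∨
      ∀ u ∈ Icc (0 : ℝ) 1, 0 < a * u ^ 2 - b * u + c := by
  by_contra! ⟨⟨w, ⟨hw0, hw1⟩, hw⟩, ⟨u, ⟨hu0, hu1⟩, hu⟩⟩
  have hw_pos : 0 < w := hw0.lt_of_ne (by rintro rfl; linarith)
  -- Convexity of `s ↦ a s² - b s + c` on the points `u ≤ 1 ≤ 1 / w`, cleared of denominators.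
  have key : w * (1 - u * w) * (a + c - b) =
      w * (1 - w) * (a * u ^ 2 - b * u + c) + (1 - u) * (a - b * w + c * w ^ 2)
        - a * (1 - u) * (1 - w) * (1 - u * w) := by ring
  rcases (mul_le_one₀ hu1 hw0 hw1).lt_or_eq with huw | huw
  · linarith [mul_pos (mul_pos hw_pos (sub_pos.2 huw)) h,
      mul_nonneg (mul_nonneg hw0 (sub_nonneg.2 hw1)) (neg_nonneg.2 hu),
      mul_nonneg (sub_nonneg.2 hu1) (neg_nonneg.2 hw),
      mul_nonneg (mul_nonneg (mul_nonneg ha.le (sub_nonneg.2 hu1)) (sub_nonneg.2 hw1))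
        (sub_pos.2 huw).le]
  · obtain rfl : u = 1 := by nlinarith
    linarith

noncomputable def conjBlockDet (A B : Matrix (Fin 2) (Fin 2) ℂ) : ℂ :=
  (fromBlocks A (B.map (starRingEnd ℂ)) B (A.map (starRingEnd ℂ))).det

noncomputable def conjBlockCross (A B : Matrix (Fin 2) (Fin 2) ℂ) : ℝ :=
  (trace (A * adjugate B * (A * adjugate B).map (starRingEnd ℂ))).re

def mPlus : Set (Matrix (Fin 2) (Fin 2) ℂ × Matrix (Fin 2) (Fin 2) ℂ) :=
  {p | p.2ᵀ = p.2 ∧ 0 < conjBlockDet p.1 p.2}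

section

variable {A B : Matrix (Fin 2) (Fin 2) ℂ}

theorem conjBlockDet_eq (A B : Matrix (Fin 2) (Fin 2) ℂ) :
    conjBlockDet A B = A.det * starRingEnd ℂ A.det + B.det * starRingEnd ℂ B.det
      - trace (A * adjugate B * (A * adjugate B).map (starRingEnd ℂ)) := by
  rw [conjBlockDet, ← det_reindex_self finSumFinEquiv, det_succ_row_zero]
  simp only [Nat.reduceAdd, Nat.succ_eq_add_one, Fin.isValue, reindex_apply, submatrix_apply,
    submatrix_submatrix, det_succ_row_zero, Function.comp_apply, Fin.succ_zero_eq_one,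
    Fin.succAbove, Fin.succ_one_eq_two, det_unique, Fin.default_eq_zero, Fin.reduceSucc,
    Fin.castSucc_zero, Fin.sum_univ_succ, Fin.coe_ofNat_eq_mod, Nat.zero_mod, pow_zero, one_mul,
    lt_self_iff_false, ↓reduceIte, Fin.castSucc_one, Finset.univ_unique, Fin.val_succ,
    Fin.val_eq_zero, zero_add, pow_one, Fin.castSucc_succ, neg_mul, Fin.succ_pos,
    Finset.sum_neg_distrib, Finset.sum_singleton, not_lt_zero, Fin.reduceCastSucc, even_two,
    Even.neg_pow, one_pow, Fin.reduceLT, fromBlocks_apply₁₁, fromBlocks_apply₂₂, map_apply,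
    fromBlocks_apply₁₂, fromBlocks_apply₂₁, Fin.lt_one_iff, Fin.reduceEq, map_add, map_mul, map_neg,
    adjugate_fin_two, Matrix.map_mul, trace_fin_two, Matrix.mul_apply, of_apply, cons_val',
    cons_val_fin_one, cons_val_zero, cons_val_succ, mul_neg, cons_val_one,
    show (finSumFinEquiv.symm 0 : Fin 2 ⊕ Fin 2) = .inl 0 from rfl,
    show (finSumFinEquiv.symm 1 : Fin 2 ⊕ Fin 2) = .inl 1 from rfl,
    show (finSumFinEquiv.symm 2 : Fin 2 ⊕ Fin 2) = .inr 0 from rfl,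
    show (finSumFinEquiv.symm 3 : Fin 2 ⊕ Fin 2) = .inr 1 from rfl]
  ring

theorem conjBlockDet_eq_ofReal (A B : Matrix (Fin 2) (Fin 2) ℂ) :
    conjBlockDet A B =
      (Complex.normSq A.det + Complex.normSq B.det - conjBlockCross A B : ℝ) := by
  have hreal := Complex.conj_eq_iff_re.mp (conj_trace_mul_map_conj (A * adjugate B))
  rw [conjBlockDet_eq, Complex.mul_conj, Complex.mul_conj, conjBlockCross]
  push_cast
  rw [hreal]

theorem conjBlockCross_smul_smul (x y : ℝ) (A B : Matrix (Fin 2) (Fin 2) ℂ) :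
    conjBlockCross ((x : ℂ) • A) ((y : ℂ) • B) = x ^ 2 * y ^ 2 * conjBlockCross A B := by
  have hmap (c : ℝ) (N : Matrix (Fin 2) (Fin 2) ℂ) :
      ((c : ℂ) • N).map (starRingEnd ℂ) = (c : ℂ) • N.map (starRingEnd ℂ) := by
    ext i j
    simp
  rw [conjBlockCross, conjBlockCross, adjugate_smul, Fintype.card_fin, pow_one,
    smul_mul_smul_comm, ← Complex.ofReal_mul, hmap, smul_mul_smul_comm, trace_smul, smul_eq_mul,
    ← Complex.ofReal_mul, Complex.re_ofReal_mul]
  ring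

theorem mem_mPlus_iff : (A, B) ∈ mPlus ↔
    Bᵀ = B ∧ 0 < Complex.normSq A.det + Complex.normSq B.det - conjBlockCross A B := by
  rw [mPlus, mem_ofPred_eq, conjBlockDet_eq_ofReal, Complex.zero_lt_real]

theorem smul_smul_mem_mPlus_iff (hB : Bᵀ = B) (x y : ℝ) : ((x : ℂ) • A, (y : ℂ) • B) ∈ mPlus ↔
    0 < x ^ 4 * Complex.normSq A.det + y ^ 4 * Complex.normSq B.det
      - x ^ 2 * y ^ 2 * conjBlockCross A B := by
  rw [mem_mPlus_iff, transpose_smul, hB, conjBlockCross_smul_smul, det_smul, det_smul]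
  simp only [Fintype.card_fin, Complex.normSq_mul, map_pow, Complex.normSq_ofReal, true_and]
  ring_nf

theorem joinedIn_mPlus_smul_smul (hB : Bᵀ = B) {x y : ℝ → ℝ} (hx : Continuous x)
    (hy : Continuous y) (hpos : ∀ t ∈ Icc (0 : ℝ) 1, 0 < x t ^ 4 * Complex.normSq A.det
      + y t ^ 4 * Complex.normSq B.det - x t ^ 2 * y t ^ 2 * conjBlockCross A B) :
    JoinedIn mPlus ((x 0 : ℂ) • A, (y 0 : ℂ) • B) ((x 1 : ℂ) • A, (y 1 : ℂ) • B) :=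
  JoinedIn.ofLine (by fun_prop) rfl rfl <| image_subset_iff.2 fun t ht =>
    (smul_smul_mem_mPlus_iff hB _ _).2 (hpos t ht)

theorem joinedIn_mPlus_zero_right (hB : Bᵀ = B) (h : ∀ w ∈ Icc (0 : ℝ) 1,
      0 < Complex.normSq A.det - conjBlockCross A B * w + Complex.normSq B.det * w ^ 2) :
    JoinedIn mPlus (A, B) (A, 0) := by
  have hpath := joinedIn_mPlus_smul_smul (A := A) hB (x := fun _ => 1) (y := fun t => 1 - t)
    (by fun_prop) (by fun_prop) fun t ht => by
      have hpos := h ((1 - t) ^ 2) ⟨by positivity, by nlinarith [ht.1, ht.2]⟩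
      linear_combination hpos
  simpa using hpath

theorem joinedIn_mPlus_zero_left (hB : Bᵀ = B) (h : ∀ u ∈ Icc (0 : ℝ) 1,
      0 < Complex.normSq A.det * u ^ 2 - conjBlockCross A B * u + Complex.normSq B.det) :
    JoinedIn mPlus (A, B) (0, B) := by
  have hpath := joinedIn_mPlus_smul_smul (B := B) hB (x := fun t => 1 - t) (y := fun _ => 1)
    (by fun_prop) (by fun_prop) fun t ht => by
      have hpos := h ((1 - t) ^ 2) ⟨by positivity, by nlinarith [ht.1, ht.2]⟩
      linear_combination hpos
  simpa using hpath

theorem exists_det_ne_zero_joinedIn_mPlus (hp : (A, B) ∈ mPlus) :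
    ∃ A', A'.det ≠ 0 ∧ JoinedIn mPlus (A, B) (A', B) := by
  set f : ℝ → Matrix (Fin 2) (Fin 2) ℂ × Matrix (Fin 2) (Fin 2) ℂ :=
    fun t => ((t : ℂ) • 1 + A, B) with hf
  have hopen : IsOpen (f ⁻¹' mPlus) := by
    have hmem (t : ℝ) : f t ∈ mPlus ↔ 0 < (conjBlockDet ((t : ℂ) • 1 + A) B).re := by
      simp only [hf, mem_mPlus_iff, conjBlockDet_eq_ofReal, Complex.ofReal_re, hp.1, true_and]
    simp only [preimage, hmem]
    exact isOpen_lt continuous_const (by unfold conjBlockDet; fun_prop)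
  obtain ⟨ε, hε, hball⟩ := Metric.isOpen_iff.mp hopen 0 (by simpa [hf] using hp)
  have hbad : {t : ℝ | det ((t : ℂ) • 1 + A) = 0}.Finite :=
    (finite_setOf_det_smul_add_eq_zero (.inr (by simp))).preimage Complex.ofReal_injective.injOn
  obtain ⟨t, ⟨ht0, htε⟩, ht⟩ := ((Ioo_infinite hε).sdiff hbad).nonempty
  have hseg : segment ℝ 0 t ⊆ f ⁻¹' mPlus :=
    ((convex_ball 0 ε).segment_subset (Metric.mem_ball_self hε)
      (by simpa [abs_of_pos ht0] using htε)).trans hball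
  refine ⟨(t : ℂ) • 1 + A, ht, ?_⟩
  simpa [hf] using ((JoinedIn.of_segment_subset hseg).map (by fun_prop)).mono
    (image_preimage_subset f _)

theorem joinedIn_mPlus_of_det_ne_zero_left {A₀ A₁ : Matrix (Fin 2) (Fin 2) ℂ} (h₀ : A₀.det ≠ 0)
    (h₁ : A₁.det ≠ 0) : JoinedIn mPlus (A₀, 0) (A₁, 0) := by
  have hline := (joinedIn_det_smul_sub_add_ne_zero h₀ h₁).map
    (f := fun z : ℂ => (z • (A₁ - A₀) + A₀, (0 : Matrix (Fin 2) (Fin 2) ℂ))) (by fun_prop)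
  simp only [zero_smul, zero_add, one_smul, sub_add_cancel] at hline
  refine hline.mono ?_
  rintro _ ⟨z, hz, rfl⟩
  simpa [mem_mPlus_iff, conjBlockCross, Complex.normSq_pos] using hz

theorem joinedIn_mPlus_of_det_ne_zero_right {B₀ B₁ : Matrix (Fin 2) (Fin 2) ℂ} (hB₀ : B₀ᵀ = B₀)
    (hB₁ : B₁ᵀ = B₁) (h₀ : B₀.det ≠ 0) (h₁ : B₁.det ≠ 0) : JoinedIn mPlus (0, B₀) (0, B₁) := by
  have hline := (joinedIn_det_smul_sub_add_ne_zero h₀ h₁).map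
    (f := fun z : ℂ => ((0 : Matrix (Fin 2) (Fin 2) ℂ), z • (B₁ - B₀) + B₀)) (by fun_prop)
  simp only [zero_smul, zero_add, one_smul, sub_add_cancel] at hline
  refine hline.mono ?_
  rintro _ ⟨z, hz, rfl⟩
  simpa [mem_mPlus_iff, conjBlockCross, Complex.normSq_pos, hB₀, hB₁] using hz

end

def symplecticJ : Matrix (Fin 2) (Fin 2) ℂ := !![0, 1; -1, 0]

theorem det_symplecticJ : symplecticJ.det = 1 := by
  simp [symplecticJ, det_fin_two]

theorem conjBlockCross_symplecticJ_one : conjBlockCross symplecticJ 1 = -2 := by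
  norm_num [conjBlockCross, symplecticJ, trace_fin_two, vecMul, dotProduct, Fin.sum_univ_two]

/-- The set `M⁺` of pairs `(A,B)` of 2×2 complex matrices with `B` symmetric and
`det [[A, conj B],[B, conj A]] > 0` is path-connected. -/
theorem M_plus_pathConnected :
    IsPathConnected
      {p : Matrix (Fin 2) (Fin 2) ℂ × Matrix (Fin 2) (Fin 2) ℂ |
        p.2ᵀ = p.2 ∧
        0 < (Matrix.fromBlocks p.1 (p.2.map (starRingEnd ℂ)) p.2
              (p.1.map (starRingEnd ℂ))).det} := by
  change IsPathConnected mPlus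
  have hJ_zero : JoinedIn mPlus (symplecticJ, 1) (symplecticJ, 0) :=
    joinedIn_mPlus_zero_right transpose_one fun w hw => by
      simp only [det_symplecticJ, det_one, conjBlockCross_symplecticJ_one, map_one]
      nlinarith [hw.1]
  have hJ_one : JoinedIn mPlus (symplecticJ, 1) (0, 1) :=
    joinedIn_mPlus_zero_left transpose_one fun u hu => by
      simp only [det_symplecticJ, det_one, conjBlockCross_symplecticJ_one, map_one]
      nlinarith [hu.1]
  refine ⟨(symplecticJ, 1), hJ_zero.source_mem, fun ⟨A, B⟩ hp => ?_⟩
  obtain ⟨A', hA', hAA'⟩ := exists_det_ne_zero_joinedIn_mPlus hp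
  obtain ⟨hB, hpos⟩ := mem_mPlus_iff.mp hAA'.target_mem
  refine JoinedIn.trans ?_ hAA'.symm
  rcases quadratic_pos_on_Icc_or (Complex.normSq_pos.2 hA') hpos with h | h
  · exact hJ_zero.trans ((joinedIn_mPlus_of_det_ne_zero_left (by simp [det_symplecticJ]) hA').trans
      (joinedIn_mPlus_zero_right hB h).symm)
  · have hB' : B.det ≠ 0 := Complex.normSq_pos.1 (by simpa using h 0 (by simp))
    exact hJ_one.trans ((joinedIn_mPlus_of_det_ne_zero_right transpose_one hB (by simp) hB').trans
      (joinedIn_mPlus_zero_left hB h).symm)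
end

section
/- For the function f(z₁,z₂,w) = (1 + |z₂|²)·|w − |z₁|² − conj(z₂)²|² on ℂ³, the Levi form of f has at least two strictly positive eigenvalues at every point of a sufficiently small punctured neighborhood of the origin; in particular f is strictly 2-convex near the origin away from the origin itself. -/
open ComplexOrder

/-- The Wirtinger derivative `∂g/∂ζ_j` of `g : ℂ³ → ℂ` (viewed as a real-differentiable
map), at a point `p`. -/
noncomputable def wirtingerDeriv (g : (Fin 3 → ℂ) → ℂ) (j : Fin 3) (p : Fin 3 → ℂ) : ℂ :=
  (1 / 2) * (fderiv ℝ g p (Pi.single j 1) - Complex.I * fderiv ℝ g p (Pi.single j Complex.I))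

/-- The conjugate Wirtinger derivative `∂g/∂(conj ζ_k)`. -/
noncomputable def wirtingerDerivBar (g : (Fin 3 → ℂ) → ℂ) (k : Fin 3) (p : Fin 3 → ℂ) : ℂ :=
  (1 / 2) * (fderiv ℝ g p (Pi.single k 1) + Complex.I * fderiv ℝ g p (Pi.single k Complex.I))

/-- The Levi form (complex Hessian) `∂²f/∂ζ_j ∂(conj ζ_k)` of a real-valued function
`f : ℂ³ → ℝ` at `p`. -/
noncomputable def leviForm (f : (Fin 3 → ℂ) → ℝ) (p : Fin 3 → ℂ) (j k : Fin 3) : ℂ :=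
  wirtingerDeriv (fun q => wirtingerDerivBar (fun r => (f r : ℂ)) k q) j p

/-- The Hermitian form `v ↦ ∑_{j,k} L_{jk} v_j conj v_k` associated with the Levi form. -/
noncomputable def leviQuadForm (f : (Fin 3 → ℂ) → ℝ) (p : Fin 3 → ℂ) (v : Fin 3 → ℂ) : ℂ :=
  ∑ j, ∑ k, leviForm f p j k * v j * starRingEnd ℂ (v k)

/-!
Write `f = G |H|²` with `G = 1 + |z₂|²` and `H = w - |z₁|² - z̄₂²`. A small Wirtinger calculus for
polynomials in `ζ, ζ̄` computes the Levi matrix exactly, and near the origin one of its `2 × 2`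
principal minors is positive definite, which gives a complex plane on which the Levi form is
positive. The `(z₂, w)` minor has determinant
`|H|² + 4G²|z₂|² - 4G Re(z₂² H) ≥ |H|² + 4G|z₂|²(G - |H|)`, positive once `|H| < 1` unless
`z₂ = H = 0`; then `z₁ ≠ 0`, and the `(z₁, w)` minor is `[[2|z₁|², -z̄₁], [-z₁, 1]]`.
-/

open Complex ComplexConjugate Module

section Wirtinger

variable {ι : Type*} [Fintype ι]

noncomputable def wirtingerCLM (a b : ι → ℂ) : (ι → ℂ) →L[ℝ] ℂ :=
  ∑ j, (a j • ContinuousLinearMap.proj (R := ℝ) j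
    + b j • conjCLE.toContinuousLinearMap.comp (ContinuousLinearMap.proj (R := ℝ) j))

theorem wirtingerCLM_apply (a b v : ι → ℂ) :
    wirtingerCLM a b v = ∑ j, (a j * v j + b j * conj (v j)) := by
  simp [wirtingerCLM]

theorem wirtingerCLM_single [DecidableEq ι] (a b : ι → ℂ) (k : ι) (c : ℂ) :
    wirtingerCLM a b (Pi.single k c) = a k * c + b k * conj c := by
  rw [wirtingerCLM_apply, Finset.sum_eq_single k (fun j _ hj => by simp [hj]) (by simp)]
  simp

def HasWirtingerDerivAt (g : (ι → ℂ) → ℂ) (a b p : ι → ℂ) : Prop :=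
  HasFDerivAt g (wirtingerCLM a b) p

namespace HasWirtingerDerivAt

variable {g h : (ι → ℂ) → ℂ} {a b a' b' p : ι → ℂ}

theorem congr_deriv (hg : HasWirtingerDerivAt g a b p) (ha : a = a') (hb : b = b') :
    HasWirtingerDerivAt g a' b' p := ha ▸ hb ▸ hg

theorem add (hg : HasWirtingerDerivAt g a b p) (hh : HasWirtingerDerivAt h a' b' p) :
    HasWirtingerDerivAt (fun q => g q + h q) (a + a') (b + b') p :=
  (HasFDerivAt.add hg hh).congr_fderiv <| by
    ext v
    simp only [add_apply, wirtingerCLM_apply, ← Finset.sum_add_distrib]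
    exact Finset.sum_congr rfl fun j _ => by simp only [Pi.add_apply]; ring

theorem neg (hg : HasWirtingerDerivAt g a b p) :
    HasWirtingerDerivAt (fun q => -g q) (-a) (-b) p :=
  (HasFDerivAt.neg hg).congr_fderiv <| by
    ext v
    simp only [neg_apply, wirtingerCLM_apply, ← Finset.sum_neg_distrib]
    exact Finset.sum_congr rfl fun j _ => by simp only [Pi.neg_apply]; ring

theorem sub (hg : HasWirtingerDerivAt g a b p) (hh : HasWirtingerDerivAt h a' b' p) :
    HasWirtingerDerivAt (fun q => g q - h q) (a - a') (b - b') p := by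
  simpa only [sub_eq_add_neg] using hg.add hh.neg

theorem mul (hg : HasWirtingerDerivAt g a b p) (hh : HasWirtingerDerivAt h a' b' p) :
    HasWirtingerDerivAt (fun q => g q * h q) (g p • a' + h p • a) (g p • b' + h p • b) p :=
  (HasFDerivAt.mul hg hh).congr_fderiv <| by
    ext v
    simp only [add_apply, smul_apply, smul_eq_mul,
      wirtingerCLM_apply, Finset.mul_sum, ← Finset.sum_add_distrib]
    exact Finset.sum_congr rfl fun j _ => by
      simp only [Pi.add_apply, Pi.smul_apply, smul_eq_mul]; ring

theorem star (hg : HasWirtingerDerivAt g a b p) :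
    HasWirtingerDerivAt (fun q => conj (g q)) (fun j => conj (b j)) (fun j => conj (a j)) p :=
  (conjCLE.toContinuousLinearMap.hasFDerivAt.comp p hg).congr_fderiv <| by
    ext v
    simp only [ContinuousLinearMap.comp_apply, wirtingerCLM_apply, ContinuousLinearEquiv.coe_coe,
      conjCLE_apply, map_sum, map_add, map_mul, conj_conj]
    exact Finset.sum_congr rfl fun j _ => by ring

end HasWirtingerDerivAt

theorem hasWirtingerDerivAt_const (c : ℂ) (p : ι → ℂ) :
    HasWirtingerDerivAt (fun _ => c) 0 0 p :=
  (hasFDerivAt_const c p).congr_fderiv <| by ext v; simp [wirtingerCLM_apply]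

theorem hasWirtingerDerivAt_apply [DecidableEq ι] (j : ι) (p : ι → ℂ) :
    HasWirtingerDerivAt (fun q => q j) (Pi.single j 1) 0 p :=
  (ContinuousLinearMap.proj (R := ℝ) (φ := fun _ : ι => ℂ) j).hasFDerivAt.congr_fderiv <| by
    ext v; simp [wirtingerCLM_apply, Pi.single_apply]

theorem hasWirtingerDerivAt_conj_apply [DecidableEq ι] (j : ι) (p : ι → ℂ) :
    HasWirtingerDerivAt (fun q => conj (q j)) 0 (Pi.single j 1) p :=
  (hasWirtingerDerivAt_apply j p).star.congr_deriv (by ext; simp) (by ext; simp [Pi.single_apply])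

end Wirtinger

namespace HasWirtingerDerivAt

variable {g : (Fin 3 → ℂ) → ℂ} {a b p : Fin 3 → ℂ}

theorem wirtingerDeriv_eq (hg : HasWirtingerDerivAt g a b p) (j : Fin 3) :
    wirtingerDeriv g j p = a j := by
  rw [wirtingerDeriv, hg.fderiv, wirtingerCLM_single, wirtingerCLM_single, conj_I, map_one]
  linear_combination (b j - a j) / 2 * I_sq

theorem wirtingerDerivBar_eq (hg : HasWirtingerDerivAt g a b p) (k : Fin 3) :
    wirtingerDerivBar g k p = b k := by
  rw [wirtingerDerivBar, hg.fderiv, wirtingerCLM_single, wirtingerCLM_single, conj_I, map_one]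
  linear_combination (a k - b k) / 2 * I_sq

end HasWirtingerDerivAt

theorem finrank_span_single_pair {K ι : Type*} [Field K] [DecidableEq ι] {i j : ι} (hij : i ≠ j) :
    finrank K (Submodule.span K {Pi.single i (1 : K), Pi.single j 1} : Submodule K (ι → K)) =
      2 := by
  have h := finrank_span_eq_card <| (Pi.linearIndependent_single_one ι K).comp ![i, j] <| by
    intro a b; fin_cases a <;> fin_cases b <;> simp [hij, hij.symm]
  rwa [Set.range_comp, Matrix.range_cons_cons_empty, Set.image_pair, Fintype.card_fin] at h

theorem sum_sum_mul_conj_single_pair {ι : Type*} [Fintype ι] [DecidableEq ι]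
    (L : ι → ι → ℂ) (i j : ι) (s t : ℂ) :
    let v : ι → ℂ := s • Pi.single i 1 + t • Pi.single j 1
    ∑ a, ∑ b, L a b * v a * conj (v b) =
      L i i * s * conj s + L i j * s * conj t + L j i * t * conj s + L j j * t * conj t := by
  simp [Pi.single_apply, apply_ite (starRingEnd ℂ), add_mul, mul_add, Finset.sum_add_distrib,
    ite_mul, mul_ite]
  ring

theorem hermitianForm_two_pos {α γ : ℝ} {β x y : ℂ} (hγ : 0 < γ) (hdet : normSq β < α * γ)
    (hxy : x ≠ 0 ∨ y ≠ 0) :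
    0 < α * x * conj x + β * x * conj y + conj β * y * conj x + γ * y * conj y := by
  have hre : α * x * conj x + β * x * conj y + conj β * y * conj x + γ * y * conj y =
      ((α * normSq x + 2 * (β * x * conj y).re + γ * normSq y : ℝ) : ℂ) := by
    apply Complex.ext <;> simp [normSq_apply] <;> ring
  -- completing the square in `y`
  have hsq : γ * (α * normSq x + 2 * (β * x * conj y).re + γ * normSq y) =
      normSq (β * x + γ * y) + (α * γ - normSq β) * normSq x := by
    simp only [normSq_apply, mul_re, mul_im, add_re, add_im, conj_re, conj_im, ofReal_re,
      ofReal_im]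
    ring
  rw [hre, zero_lt_real]
  refine pos_of_mul_pos_right (hsq ▸ ?_) hγ.le
  rcases eq_or_ne x 0 with rfl | hx
  · have hy := hxy.resolve_left (not_not.mpr rfl)
    simp [normSq_pos.mpr hy, hγ]
  · nlinarith [normSq_nonneg (β * x + γ * y), normSq_pos.mpr hx]

theorem exists_finrank_eq_two_pos_of_principal_minor {ι : Type*} [Fintype ι] [DecidableEq ι]
    (L : ι → ι → ℂ) {i j : ι} (hij : i ≠ j) {α γ : ℝ} (hii : L i i = α) (hjj : L j j = γ)
    (hji : L j i = conj (L i j)) (hγ : 0 < γ) (hdet : normSq (L i j) < α * γ) :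
    ∃ V : Submodule ℂ (ι → ℂ), finrank ℂ V = 2 ∧
      ∀ v ∈ V, v ≠ 0 → 0 < ∑ a, ∑ b, L a b * v a * conj (v b) := by
  refine ⟨_, finrank_span_single_pair hij, fun v hv hv0 => ?_⟩
  obtain ⟨s, t, rfl⟩ := Submodule.mem_span_pair.mp hv
  rw [sum_sum_mul_conj_single_pair, hii, hjj, hji]
  refine hermitianForm_two_pos hγ hdet (not_and_or.mp fun hst => hv0 ?_)
  simp [hst.1, hst.2]

namespace HyperbolicModel

noncomputable def f (q : Fin 3 → ℂ) : ℝ :=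
  (1 + ‖q 1‖ ^ 2) * ‖q 2 - (‖q 0‖ : ℂ) ^ 2 - conj (q 1) ^ 2‖ ^ 2

noncomputable def weight (q : Fin 3 → ℂ) : ℂ := 1 + q 1 * conj (q 1)

noncomputable def defect (q : Fin 3 → ℂ) : ℂ := q 2 - q 0 * conj (q 0) - conj (q 1) ^ 2

theorem ofReal_f (q : Fin 3 → ℂ) : (f q : ℂ) = weight q * (defect q * conj (defect q)) := by
  simp only [f, weight, defect, ofReal_mul, ofReal_add, ofReal_one, ofReal_pow, ← mul_conj',
    map_sub, map_mul, map_pow, conj_conj]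

theorem hasWirtingerDerivAt_weight (p : Fin 3 → ℂ) :
    HasWirtingerDerivAt weight ![0, conj (p 1), 0] ![0, p 1, 0] p :=
  ((hasWirtingerDerivAt_const 1 p).add
    ((hasWirtingerDerivAt_apply 1 p).mul (hasWirtingerDerivAt_conj_apply 1 p))).congr_deriv
    (by ext j; fin_cases j <;> simp) (by ext j; fin_cases j <;> simp)

theorem hasWirtingerDerivAt_defect (p : Fin 3 → ℂ) :
    HasWirtingerDerivAt defect ![-conj (p 0), 0, 1] ![-p 0, -(2 * conj (p 1)), 0] p := by
  have h := ((hasWirtingerDerivAt_apply 2 p).sub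
    ((hasWirtingerDerivAt_apply 0 p).mul (hasWirtingerDerivAt_conj_apply 0 p))).sub
    ((hasWirtingerDerivAt_conj_apply 1 p).mul (hasWirtingerDerivAt_conj_apply 1 p))
  simp only [← sq] at h
  exact h.congr_deriv (by ext j; fin_cases j <;> simp) (by ext j; fin_cases j <;> simp; ring)

noncomputable def dbar (q : Fin 3 → ℂ) : Fin 3 → ℂ :=
  ![-(weight q * q 0 * (defect q + conj (defect q))),
    q 1 * defect q * conj (defect q) - 2 * weight q * conj (q 1) * conj (defect q),
    weight q * defect q]

theorem wirtingerDerivBar_f (q : Fin 3 → ℂ) (k : Fin 3) :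
    wirtingerDerivBar (fun r => (f r : ℂ)) k q = dbar q k := by
  have h := (hasWirtingerDerivAt_weight q).mul
    ((hasWirtingerDerivAt_defect q).mul (hasWirtingerDerivAt_defect q).star)
  simp only [ofReal_f]
  rw [h.wirtingerDerivBar_eq]
  fin_cases k <;> simp only [Pi.add_apply, Pi.smul_apply, smul_eq_mul] <;> simp [dbar] <;> ring

noncomputable def levi (p : Fin 3 → ℂ) : Fin 3 → Fin 3 → ℂ :=
  ![![2 * weight p * (p 0 * conj (p 0)) - weight p * (defect p + conj (defect p)),
      2 * weight p * (conj (p 0) * conj (p 1)) - p 1 * conj (p 0) * (defect p + conj (defect p)),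
      -(weight p * conj (p 0))],
    ![2 * weight p * (p 0 * p 1) - p 0 * conj (p 1) * (defect p + conj (defect p)),
      defect p * conj (defect p) - 2 * p 1 ^ 2 * defect p - 2 * conj (p 1) ^ 2 * conj (defect p)
        + 4 * weight p * (p 1 * conj (p 1)),
      conj (p 1) * defect p],
    ![-(weight p * p 0), p 1 * conj (defect p), weight p]]

theorem exists_hasWirtingerDerivAt_dbar (p : Fin 3 → ℂ) (k : Fin 3) :
    ∃ b, HasWirtingerDerivAt (fun q => dbar q k) (fun j => levi p j k) b p := by
  have hG := hasWirtingerDerivAt_weight p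
  have hH := hasWirtingerDerivAt_defect p
  fin_cases k <;> [
    refine ⟨_, ((hG.mul (hasWirtingerDerivAt_apply 0 p)).mul (hH.add hH.star)).neg.congr_deriv
      ?_ rfl⟩;
    refine ⟨_, ((((hasWirtingerDerivAt_apply 1 p).mul hH).mul hH.star).sub
      ((((hasWirtingerDerivAt_const 2 p).mul hG).mul (hasWirtingerDerivAt_conj_apply 1 p)).mul
        hH.star)).congr_deriv ?_ rfl⟩;
    refine ⟨_, (hG.mul hH).congr_deriv ?_ rfl⟩] <;>
  · ext j
    fin_cases j <;>
      simp only [Pi.add_apply, Pi.sub_apply, Pi.neg_apply, Pi.smul_apply, smul_eq_mul] <;>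
      simp [levi, map_ofNat] <;> ring

theorem leviForm_f (p : Fin 3 → ℂ) (j k : Fin 3) : leviForm f p j k = levi p j k := by
  obtain ⟨b, hb⟩ := exists_hasWirtingerDerivAt_dbar p k
  simp only [leviForm, wirtingerDerivBar_f]
  exact hb.wirtingerDeriv_eq j

theorem leviQuadForm_f (p v : Fin 3 → ℂ) :
    leviQuadForm f p v = ∑ a, ∑ b, levi p a b * v a * conj (v b) := by
  simp only [leviQuadForm, leviForm_f]

theorem exists_plane_pos_of_defect_eq_zero {p : Fin 3 → ℂ} (hp1 : p 1 = 0) (hH : defect p = 0)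
    (hp0 : p 0 ≠ 0) :
    ∃ V : Submodule ℂ (Fin 3 → ℂ), finrank ℂ V = 2 ∧ ∀ v ∈ V, v ≠ 0 → 0 < leviQuadForm f p v := by
  simp only [leviQuadForm_f]
  refine exists_finrank_eq_two_pos_of_principal_minor (levi p) (i := 0) (j := 2) (by decide)
    (α := 2 * normSq (p 0)) (γ := 1) ?_ ?_ ?_ one_pos ?_ <;>
    simp [levi, weight, hp1, hH, mul_conj, normSq_pos.mpr hp0]

theorem exists_plane_pos_of_norm_defect_lt_one {p : Fin 3 → ℂ} (hH : ‖defect p‖ < 1)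
    (hne : p 1 ≠ 0 ∨ defect p ≠ 0) :
    ∃ V : Submodule ℂ (Fin 3 → ℂ), finrank ℂ V = 2 ∧ ∀ v ∈ V, v ≠ 0 → 0 < leviQuadForm f p v := by
  simp only [leviQuadForm_f]
  refine exists_finrank_eq_two_pos_of_principal_minor (levi p) (i := 1) (j := 2) (by decide)
    (α := normSq (defect p) - 4 * (p 1 ^ 2 * defect p).re + 4 * (1 + normSq (p 1)) * normSq (p 1))
    (γ := 1 + normSq (p 1)) ?_ ?_ ?_ (add_pos_of_pos_of_nonneg one_pos (normSq_nonneg _)) ?_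
  · apply Complex.ext <;> simp [levi, weight, normSq_apply, pow_two] <;> ring
  · simp [levi, weight, mul_conj]
  · simp [levi, mul_comm]
  · set a := ‖defect p‖
    set n := ‖p 1‖ ^ 2
    have hn : 0 ≤ n := by positivity
    have hr : (p 1 ^ 2 * defect p).re * (1 + n) ≤ n * a * (1 + n) :=
      mul_le_mul_of_nonneg_right ((re_le_norm _).trans_eq (by rw [norm_mul, norm_pow]))
        (by positivity)
    have hgap : 0 ≤ n * (1 + n) * (1 + n - a) := by
      have : a ≤ 1 + n := by linarith
      positivity
    have hsum : 0 < a ^ 2 + n * (1 + n) * (1 + n - a) := by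
      rcases hne with h | h
      · have : 0 < n := by positivity
        have : 0 < 1 + n - a := by linarith
        positivity
      · have : 0 < a := norm_pos_iff.mpr h
        positivity
    simp only [levi, Matrix.cons_val, normSq_eq_norm_sq, norm_mul, norm_conj]
    nlinarith

theorem norm_defect_lt_one {p : Fin 3 → ℂ} (hp : ‖p‖ < 1 / 2) : ‖defect p‖ < 1 := by
  have h : ∀ i, ‖p i‖ < 1 / 2 := fun i => (norm_le_pi_norm p i).trans_lt hp
  calc ‖defect p‖ ≤ ‖p 2‖ + ‖p 0‖ ^ 2 + ‖p 1‖ ^ 2 := by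
        refine (norm_sub_le _ _).trans (add_le_add ((norm_sub_le _ _).trans_eq ?_) ?_)
        · rw [norm_mul, norm_conj, sq]
        · rw [norm_pow, norm_conj]
    _ < 1 / 2 + (1 / 2) ^ 2 + (1 / 2) ^ 2 := by
        gcongr <;> [exact h 2; exact h 0; exact h 1]
    _ = 1 := by norm_num

end HyperbolicModel

open HyperbolicModel

/-- For `f(z₁,z₂,w) = (1 + |z₂|²)|w − |z₁|² − conj z₂²|²`, the Levi form has at least
two strictly positive eigenvalues at every point of a sufficiently small punctured
neighborhood of the origin: there is a 2-dimensional complex subspace on which the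
associated Hermitian form is positive definite. In particular `f` is strictly
2-convex near the origin away from the origin. -/
theorem two_convex_model_hyperbolic :
    ∃ ε > 0, ∀ p : Fin 3 → ℂ, ‖p‖ < ε → p ≠ 0 →
      ∃ V : Submodule ℂ (Fin 3 → ℂ), Module.finrank ℂ V = 2 ∧
        ∀ v ∈ V, v ≠ 0 →
          0 < leviQuadForm (fun q => (1 + ‖q 1‖ ^ 2) *
                ‖q 2 - (‖q 0‖ : ℂ) ^ 2
                  - (starRingEnd ℂ (q 1)) ^ 2‖ ^ 2) p v := by
  refine ⟨1 / 2, by norm_num, fun p hp hp0 => ?_⟩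
  by_cases h : p 1 = 0 ∧ defect p = 0
  · refine exists_plane_pos_of_defect_eq_zero h.1 h.2 fun hz₁ => hp0 ?_
    have hw : p 2 = 0 := by simpa [defect, h.1, hz₁] using h.2
    ext i; fin_cases i <;> simp [h.1, hz₁, hw]
  · exact exists_plane_pos_of_norm_defect_lt_one (norm_defect_lt_one hp) (not_and_or.mp h)
end

section
/- For a 2×2 Hermitian-quadratic model: if u = w − |z₁|² − conj(z₂)², the 2×2 minor [[|u|² − 2(z₂²u + conj(z₂)² conj(u)) + 4|z₂|²(1+|z₂|²), conj(z₂)u],[z₂ conj(u), 1 + |z₂|²]] of the Levi form of (1+|z₂|²)|u|² has determinant (|u| − 2|z₂|²(1+|z₂|²))² + 2(1+|z₂|²)(2|u||z₂|² − z₂²u − conj(z₂)²conj(u)) + 4|z₂|²(1+|z₂|²)²(1 − |z₂|²), which is strictly positive for |z₂| < 1 unless z₂ = 0 and u = 0. -/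
open Matrix ComplexOrder

/-! Expanding the determinant and substituting `|u|² = u ū`, `|z₂|² = z₂ z̄₂` is a polynomial
identity. In the resulting sum the middle bracket is `2(|z₂²u| − Re(z₂²u)) ≥ 0`, the square is
nonnegative, and for `0 < |z₂| < 1` the last term is positive; if `z₂ = 0` the sum is `|u|²`. -/

theorem levi_det_identity {R : Type*} [CommRing R] {z z' u u' r s : R}
    (hr : r ^ 2 = u * u') (hs : s ^ 2 = z * z') :
    (r ^ 2 - 2 * (z ^ 2 * u + z' ^ 2 * u') + 4 * s ^ 2 * (1 + s ^ 2)) * (1 + s ^ 2)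
        - z' * u * (z * u')
      = (r - 2 * s ^ 2 * (1 + s ^ 2)) ^ 2
        + 2 * (1 + s ^ 2) * (2 * r * s ^ 2 - z ^ 2 * u - z' ^ 2 * u')
        + 4 * s ^ 2 * (1 + s ^ 2) ^ 2 * (1 - s ^ 2) := by
  linear_combination s ^ 2 * hr + u * u' * hs

theorem levi_det_real_pos {r s m : ℝ} (hm : 0 ≤ m) (hs : s ^ 2 < 1) (hrs : s ≠ 0 ∨ r ≠ 0) :
    0 < (r - 2 * s ^ 2 * (1 + s ^ 2)) ^ 2 + 2 * (1 + s ^ 2) * m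
      + 4 * s ^ 2 * (1 + s ^ 2) ^ 2 * (1 - s ^ 2) := by
  by_cases hs0 : s = 0
  · have hr : r ≠ 0 := hrs.resolve_left (not_not.mpr hs0)
    subst hs0
    have : 0 < r ^ 2 := by positivity
    linarith
  · have hlast : 0 < 4 * s ^ 2 * (1 + s ^ 2) ^ 2 * (1 - s ^ 2) := by
      have : 0 < 1 - s ^ 2 := by linarith
      positivity
    have hmid : 0 ≤ 2 * (1 + s ^ 2) * m := by positivity
    linarith [sq_nonneg (r - 2 * s ^ 2 * (1 + s ^ 2))]

theorem Complex.two_mul_norm_sub_sub_conj (q : ℂ) :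
    2 * (‖q‖ : ℂ) - q - starRingEnd ℂ q = ((2 * (‖q‖ - q.re) : ℝ) : ℂ) := by
  rw [sub_sub, Complex.add_conj]
  push_cast
  ring

/-- The 2×2 minor of the Levi form of `(1+|z₂|²)|u|²` (with `u = w − |z₁|² − conj z₂²`)
given by
`[[|u|² − 2(z₂²u + conj z₂² conj u) + 4|z₂|²(1+|z₂|²), conj z₂ · u],[z₂ · conj u, 1+|z₂|²]]`
has determinant
`(|u| − 2|z₂|²(1+|z₂|²))² + 2(1+|z₂|²)(2|u||z₂|² − z₂²u − conj z₂² conj u)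
  + 4|z₂|²(1+|z₂|²)²(1−|z₂|²)`,
which is strictly positive for `|z₂| < 1` unless `z₂ = 0` and `u = 0`. -/
theorem levi_minor_det (z₂ u : ℂ) :
    (!![ (‖u‖ : ℂ) ^ 2
          - 2 * (z₂ ^ 2 * u + (starRingEnd ℂ z₂) ^ 2 * starRingEnd ℂ u)
          + 4 * (‖z₂‖ : ℂ) ^ 2 * (1 + (‖z₂‖ : ℂ) ^ 2),
        starRingEnd ℂ z₂ * u;
        z₂ * starRingEnd ℂ u, 1 + (‖z₂‖ : ℂ) ^ 2] :
      Matrix (Fin 2) (Fin 2) ℂ).det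
      = ((‖u‖ : ℂ) - 2 * (‖z₂‖ : ℂ) ^ 2
            * (1 + (‖z₂‖ : ℂ) ^ 2)) ^ 2
        + 2 * (1 + (‖z₂‖ : ℂ) ^ 2)
            * (2 * (‖u‖ : ℂ) * (‖z₂‖ : ℂ) ^ 2
              - z₂ ^ 2 * u - (starRingEnd ℂ z₂) ^ 2 * starRingEnd ℂ u)
        + 4 * (‖z₂‖ : ℂ) ^ 2 * (1 + (‖z₂‖ : ℂ) ^ 2) ^ 2
            * (1 - (‖z₂‖ : ℂ) ^ 2)
    ∧ (‖z₂‖ < 1 → ¬(z₂ = 0 ∧ u = 0) →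
        0 < (!![ (‖u‖ : ℂ) ^ 2
          - 2 * (z₂ ^ 2 * u + (starRingEnd ℂ z₂) ^ 2 * starRingEnd ℂ u)
          + 4 * (‖z₂‖ : ℂ) ^ 2 * (1 + (‖z₂‖ : ℂ) ^ 2),
        starRingEnd ℂ z₂ * u;
        z₂ * starRingEnd ℂ u, 1 + (‖z₂‖ : ℂ) ^ 2] :
      Matrix (Fin 2) (Fin 2) ℂ).det) := by
  have hdet := (Matrix.det_fin_two_of _ _ _ _).trans
    (levi_det_identity (Complex.mul_conj' u).symm (Complex.mul_conj' z₂).symm)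
  refine ⟨hdet, fun hlt hne => ?_⟩
  have hmid : 2 * (‖u‖ : ℂ) * (‖z₂‖ : ℂ) ^ 2 - z₂ ^ 2 * u
      - (starRingEnd ℂ z₂) ^ 2 * starRingEnd ℂ u
      = ((2 * (‖z₂ ^ 2 * u‖ - (z₂ ^ 2 * u).re) : ℝ) : ℂ) := by
    rw [← Complex.two_mul_norm_sub_sub_conj, map_mul, map_pow, norm_mul, norm_pow]
    push_cast
    ring
  have hs : ‖z₂‖ ^ 2 < 1 := by nlinarith [norm_nonneg z₂]
  have hrs : ‖z₂‖ ≠ 0 ∨ ‖u‖ ≠ 0 := by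
    simpa only [norm_ne_zero_iff, not_and_or] using hne
  have hre : 0 ≤ 2 * (‖z₂ ^ 2 * u‖ - (z₂ ^ 2 * u).re) := by
    linarith [Complex.re_le_norm (z₂ ^ 2 * u)]
  rw [hdet, hmid]
  exact_mod_cast levi_det_real_pos hre hs hrs
end
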